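/- Let P_{XY} be a probability distribution on finite sets 𝒳 × 𝒴. Then for any t ∈ ℝ with |t| ≤ 1/log(|𝒳|+3), log(E_{(x,y)←P_{XY}}[P_{X|Y}(x,y)^{−t}]) ≤ t·H(X|Y) + (1/2)·t²·log²(|𝒳|+3), where the expectation is taken over pairs (x,y) chosen according to P_{XY} (restricted to pairs of positive probability). -/

import Mathlib

/-
Write `v = -log P_{X|Y}` (natural logarithm), `c = log (|𝒳| + 3)` and `Λ u = log E[e^{u v}]`.
Then `Λ 0 = 0`, `Λ' 0 = E v = H(X|Y) log 2`, and `Λ'' u` is the variance of `v` under the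
tilted distribution `∝ P e^{u v}`, hence at most its second moment about `c`. Once that moment
is at most `B = c² / log 2` for `|u| ≤ log 2 / c`, `Λ u - B u² / 2` is concave there and lies
below its tangent at `0`; dividing by `log 2` gives the bound.

The moment bound holds for each conditional distribution `q = P_{X|Y=y}` on `n = |𝒳|` points.
As `(v - c)² = c² + v (v - 2c)`, only outcomes with `v > 2c`, i.e. `q < (n + 3)⁻²`, contribute
beyond `c²`. There are fewer than `n` of them, since some outcome has `q ≥ 1/n`, and each
contributes at most `e^{2uc} (n + 3)⁻² (16 e⁻² + 4c e⁻¹)`, as `x e^{-x}` and `x² e^{-x}` are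
bounded for `x ≥ 0`. The tilted mass `E_q e^{u v}` is at least `e^{2uc} / 4` by `e^x ≥ 1 + x`
and `H(q) ≤ log n`, and a numerical check for `c ≥ log 5` closes the bound.
-/

open Finset Real

/-- The conditional Shannon entropy `H(X|Y)` of a joint distribution `P` on `X × Y`,
with binary logarithm. -/
noncomputable def condEntropy' {X Y : Type*} [Fintype X] [Fintype Y]
    (P : X × Y → ℝ) : ℝ :=
  -∑ z : X × Y, P z * Real.logb 2 (P z / (∑ x : X, P (x, z.2)))

theorem ConcaveOn.le_add_mul_sub_of_hasDerivAt {S : Set ℝ} {f : ℝ → ℝ} {f' x y : ℝ}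
    (hf : ConcaveOn ℝ S f) (hx : x ∈ S) (hy : y ∈ S) (hd : HasDerivAt f f' x) :
    f y ≤ f x + f' * (y - x) := by
  rcases lt_trichotomy x y with hxy | rfl | hyx
  · have := hf.slope_le_of_hasDerivAt hx hy hxy hd
    rw [slope_def_field, div_le_iff₀ (sub_pos.mpr hxy)] at this
    linarith
  · simp
  · have := hf.le_slope_of_hasDerivAt hy hx hyx hd
    rw [slope_def_field, le_div_iff₀ (sub_pos.mpr hyx)] at this
    linarith

section MomentGenerating

variable {ι : Type*} [Fintype ι]

theorem hasDerivAt_sum_mul_exp (p v : ι → ℝ) (u : ℝ) :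
    HasDerivAt (fun u => ∑ i, p i * exp (u * v i)) (∑ i, p i * v i * exp (u * v i)) u := by
  refine HasDerivAt.fun_sum fun i _ => ?_
  refine (((hasDerivAt_id u).mul_const (v i)).exp.const_mul (p i)).congr_deriv ?_
  simp only [id_eq, one_mul]; ring

variable {p : ι → ℝ}

theorem sum_mul_exp_pos (hp0 : ∀ i, 0 ≤ p i) (hp1 : ∑ i, p i = 1) (v : ι → ℝ) (u : ℝ) :
    0 < ∑ i, p i * exp (u * v i) := by
  obtain ⟨i, -, hi⟩ := exists_lt_of_sum_lt (s := univ) (f := fun _ => (0 : ℝ)) (g := p)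
    (by simp [hp1])
  exact sum_pos' (fun j _ => mul_nonneg (hp0 j) (exp_pos _).le)
    ⟨i, mem_univ i, mul_pos hi (exp_pos _)⟩

theorem concaveOn_log_sum_mul_exp_sub (hp0 : ∀ i, 0 ≤ p i) (hp1 : ∑ i, p i = 1)
    {v : ι → ℝ} {a B c : ℝ}
    (hmom : ∀ u, |u| ≤ a →
      ∑ i, p i * exp (u * v i) * (v i - c) ^ 2 ≤ B * ∑ i, p i * exp (u * v i)) :
    ConcaveOn ℝ (Set.Icc (-a) a) fun u => log (∑ i, p i * exp (u * v i)) - B / 2 * u ^ 2 := by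
  let g u := ∑ i, p i * exp (u * v i)
  let g₁ u := ∑ i, p i * v i * exp (u * v i)
  let g₂ u := ∑ i, p i * v i * v i * exp (u * v i)
  have hg := sum_mul_exp_pos hp0 hp1 v
  have hf' : ∀ u, HasDerivAt (fun u => log (g u) - B / 2 * u ^ 2) (g₁ u / g u - B * u) u :=
    fun u => (((hasDerivAt_sum_mul_exp p v u).log (hg u).ne').sub
      ((hasDerivAt_pow 2 u).const_mul (B / 2))).congr_deriv (by push_cast; ring)
  have hf'' : ∀ u, HasDerivAt (fun u => g₁ u / g u - B * u)
      ((g₂ u * g u - g₁ u * g₁ u) / g u ^ 2 - B) u :=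
    fun u => (((hasDerivAt_sum_mul_exp (fun i => p i * v i) v u).div
      (hasDerivAt_sum_mul_exp p v u) (hg u).ne').sub
      ((hasDerivAt_id u).const_mul B)).congr_deriv (by rw [mul_one])
  refine concaveOn_of_hasDerivWithinAt2_nonpos (convex_Icc _ _)
    (HasDerivAt.continuousOn fun u _ => hf' u) (fun u _ => (hf' u).hasDerivWithinAt)
    (fun u _ => (hf'' u).hasDerivWithinAt) fun u hu => ?_
  have hmom_u : g₂ u - 2 * c * g₁ u + c ^ 2 * g u ≤ B * g u := by
    refine le_of_eq_of_le ?_ (hmom u (abs_le.mpr (Set.mem_Icc.mp (interior_subset hu))))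
    simp only [g, g₁, g₂, mul_sum, ← sum_sub_distrib, ← sum_add_distrib]
    exact sum_congr rfl fun i _ => by ring
  rw [sub_nonpos, div_le_iff₀ (pow_pos (hg u) 2)]
  -- the tilted variance is at most the tilted second moment about `c`
  nlinarith [sq_nonneg (g₁ u - c * g u), mul_le_mul_of_nonneg_right hmom_u (hg u).le]

theorem log_sum_mul_exp_le (hp0 : ∀ i, 0 ≤ p i) (hp1 : ∑ i, p i = 1)
    {v : ι → ℝ} {a B c : ℝ}
    (hmom : ∀ u, |u| ≤ a →
      ∑ i, p i * exp (u * v i) * (v i - c) ^ 2 ≤ B * ∑ i, p i * exp (u * v i))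
    {t : ℝ} (ht : |t| ≤ a) :
    log (∑ i, p i * exp (t * v i)) ≤ t * ∑ i, p i * v i + B / 2 * t ^ 2 := by
  have ha : 0 ≤ a := (abs_nonneg t).trans ht
  have hderiv := (((hasDerivAt_sum_mul_exp p v 0).log
      (sum_mul_exp_pos hp0 hp1 v 0).ne').sub ((hasDerivAt_pow 2 (0 : ℝ)).const_mul (B / 2)))
  have := (concaveOn_log_sum_mul_exp_sub hp0 hp1 hmom).le_add_mul_sub_of_hasDerivAt
    (by simp [ha]) (abs_le.mp ht) hderiv
  simp only [zero_mul, exp_zero, mul_one, hp1, log_one] at this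
  linarith

end MomentGenerating

lemma sq_mul_exp_neg_le {x : ℝ} (hx : 0 ≤ x) : x ^ 2 * exp (-x) ≤ 4 * exp (-2) := by
  have hsq : x ^ 2 * exp (-x) = 4 * (x / 2 * exp (-(x / 2))) ^ 2 := by
    rw [mul_pow, ← exp_nat_mul]; push_cast; ring_nf
  have htwo : exp (-2) = exp (-1) ^ 2 := by rw [← exp_nat_mul]; norm_num
  rw [hsq, htwo]
  gcongr
  exact mul_exp_neg_le_exp_neg_one _

lemma exp_sub_one_mul_mul_sub_le {c s v : ℝ} (hc : 0 ≤ c) (hs : s ≤ 1 / 2)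
    (hv : 2 * c ≤ v) :
    exp ((s - 1) * v) * (v * (v - 2 * c))
      ≤ exp (2 * s * c - 2 * c) * (16 * exp (-2) + 4 * c * exp (-1)) := by
  set u := v - 2 * c
  have hu : 0 ≤ u := by simp only [u]; linarith
  have hdecay : exp ((s - 1) * v) ≤ exp (2 * s * c - 2 * c) * exp (-(u / 2)) := by
    rw [← exp_add]
    gcongr
    nlinarith
  have hsq : u ^ 2 * exp (-(u / 2)) ≤ 16 * exp (-2) := by
    nlinarith [sq_mul_exp_neg_le (by positivity : 0 ≤ u / 2)]
  have hlin : u * exp (-(u / 2)) ≤ 2 * exp (-1) := by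
    nlinarith [mul_exp_neg_le_exp_neg_one (u / 2)]
  calc exp ((s - 1) * v) * (v * (v - 2 * c))
      ≤ exp (2 * s * c - 2 * c) * exp (-(u / 2)) * (u ^ 2 + 2 * c * u) := by
        have : v * (v - 2 * c) = u ^ 2 + 2 * c * u := by simp only [u]; ring
        rw [this]
        gcongr
    _ ≤ exp (2 * s * c - 2 * c) * (16 * exp (-2) + 4 * c * exp (-1)) := by
        rw [mul_assoc]
        gcongr
        nlinarith [mul_le_mul_of_nonneg_left hlin (by positivity : 0 ≤ 2 * c)]

lemma log_five_gt_d1 : 1.6 < log 5 := by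
  rw [lt_log_iff_exp_lt (by norm_num)]
  have h8 : exp 1.6 ^ 5 = exp 1 ^ 8 := by rw [← exp_nat_mul, ← exp_nat_mul]; norm_num
  have he : exp 1 ^ 8 < 5 ^ 5 :=
    (pow_lt_pow_left₀ exp_one_lt_d9 (exp_pos 1).le (by norm_num)).trans (by norm_num)
  exact lt_of_pow_lt_pow_left₀ 5 (by norm_num) (h8 ▸ he)

lemma four_mul_exp_neg_two_add_mul_exp_neg_one_le {c : ℝ} (hc : 1.6 ≤ c) :
    4 * exp (-2) + c * exp (-1) ≤ c ^ 2 / log 2 - c ^ 2 := by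
  have he1 : exp (-1) ≤ 0.36787945 := by
    rw [exp_neg, inv_le_comm₀ (exp_pos 1) (by norm_num)]
    linarith [exp_one_gt_d9]
  have he2 : exp (-2) ≤ 0.1353353 := by
    rw [show (-2 : ℝ) = -1 + -1 by norm_num, exp_add]
    nlinarith [exp_pos (-1)]
  have hl2 : 0 < log 2 := log_pos one_lt_two
  have hinv : 1.44269504 ≤ 1 / log 2 := by
    rw [le_one_div (by norm_num) hl2]; linarith [log_two_lt_d9]
  have : 1.44269504 * c ^ 2 ≤ c ^ 2 / log 2 := by
    rw [div_eq_mul_one_div, mul_comm (c ^ 2)]; gcongr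
  nlinarith [mul_le_mul_of_nonneg_left he1 (by linarith : (0 : ℝ) ≤ c)]

lemma sub_one_div_sq_mul_le {n : ℕ} (hn : 1 ≤ n) :
    ((n : ℝ) - 1) / ((n : ℝ) + 3) ^ 2 * (64 * exp (-2) + 16 * log (n + 3) * exp (-1))
      ≤ log (n + 3) ^ 2 / log 2 - log (n + 3) ^ 2 := by
  set c := log ((n : ℝ) + 3)
  have hl2 : 0 < log 2 := log_pos one_lt_two
  have hB : 0 ≤ c ^ 2 / log 2 - c ^ 2 := by
    rw [sub_nonneg, le_div_iff₀ hl2]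
    nlinarith [log_two_lt_d9, sq_nonneg c]
  rcases hn.eq_or_lt with rfl | hn2
  · simpa using hB
  have hc : 1.6 ≤ c := by
    refine log_five_gt_d1.le.trans (log_le_log (by norm_num) ?_)
    have : (2 : ℝ) ≤ n := by exact_mod_cast hn2
    linarith
  have hcount : ((n : ℝ) - 1) / ((n : ℝ) + 3) ^ 2 ≤ 1 / 16 := by
    rw [div_le_iff₀ (by positivity)]
    nlinarith [sq_nonneg ((n : ℝ) - 5)]
  calc ((n : ℝ) - 1) / ((n : ℝ) + 3) ^ 2 * (64 * exp (-2) + 16 * c * exp (-1))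
      ≤ 1 / 16 * (64 * exp (-2) + 16 * c * exp (-1)) := by gcongr
    _ = 4 * exp (-2) + c * exp (-1) := by ring
    _ ≤ c ^ 2 / log 2 - c ^ 2 := four_mul_exp_neg_two_add_mul_exp_neg_one_le hc

section Surprisal

variable {ι : Type*} [Fintype ι] {q : ι → ℝ}

lemma le_one_of_sum_eq_one (hq0 : ∀ i, 0 ≤ q i) (hq1 : ∑ i, q i = 1) (i : ι) : q i ≤ 1 :=
  hq1 ▸ single_le_sum (fun j _ => hq0 j) (mem_univ i)

lemma card_pos_of_sum_eq_one (hq1 : ∑ i, q i = 1) : 0 < Fintype.card ι :=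
  card_pos.mpr (nonempty_of_sum_ne_zero (hq1 ▸ one_ne_zero))

lemma sum_negMulLog_le_log_card (hq0 : ∀ i, 0 ≤ q i) (hq1 : ∑ i, q i = 1) :
    ∑ i, negMulLog (q i) ≤ log (Fintype.card ι) := by
  have hn : (0 : ℝ) < Fintype.card ι := by exact_mod_cast card_pos_of_sum_eq_one hq1
  have hjensen := concaveOn_negMulLog.le_map_sum (t := univ)
    (w := fun _ => (Fintype.card ι : ℝ)⁻¹) (p := q) (fun _ _ => by positivity)
    (by simp [hn.ne']) (fun i _ => hq0 i)
  simp only [smul_eq_mul, ← mul_sum, hq1, mul_one] at hjensen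
  rw [negMulLog, log_inv] at hjensen
  rw [← mul_le_mul_iff_of_pos_left (inv_pos.mpr hn)]
  linarith

lemma card_filter_lt_neg_log_le (hq1 : ∑ i, q i = 1) {b : ℝ}
    (hb : log (Fintype.card ι) ≤ b) :
    (#{i | b < -log (q i)} : ℝ) ≤ Fintype.card ι - 1 := by
  have hn : (0 : ℝ) < Fintype.card ι := by exact_mod_cast card_pos_of_sum_eq_one hq1
  obtain ⟨i, -, hi⟩ : ∃ i ∈ univ, (Fintype.card ι : ℝ)⁻¹ ≤ q i := by
    refine exists_le_of_sum_le (nonempty_of_sum_ne_zero (hq1 ▸ one_ne_zero)) ?_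
    rw [hq1, sum_const, card_univ, nsmul_eq_mul, mul_inv_cancel₀ hn.ne']
  have hi' : ¬ b < -log (q i) := by
    have := log_le_log (by positivity) hi
    rw [log_inv] at this
    linarith
  have hlt : #{i | b < -log (q i)} < Fintype.card ι :=
    card_lt_card (filter_ssubset.mpr ⟨i, mem_univ i, hi'⟩)
  have : (#{i | b < -log (q i)} : ℝ) + 1 ≤ Fintype.card ι := by exact_mod_cast hlt
  linarith

lemma sum_mul_exp_mul_le_card_filter_mul (hq0 : ∀ i, 0 ≤ q i) (hq_le : ∀ i, q i ≤ 1)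
    {c s : ℝ} (hc : 0 ≤ c) (hs : s ≤ 1 / 2) :
    ∑ i, q i * exp (s * -log (q i)) * (-log (q i) * (-log (q i) - 2 * c))
      ≤ #{i | 2 * c < -log (q i)}
          * (exp (2 * s * c - 2 * c) * (16 * exp (-2) + 4 * c * exp (-1))) := by
  rw [← sum_filter_add_sum_filter_not univ (fun i => 2 * c < -log (q i)), card_eq_sum_ones,
    Nat.cast_sum, sum_mul]
  have hhead : ∑ i ∈ univ with ¬ 2 * c < -log (q i),
      q i * exp (s * -log (q i)) * (-log (q i) * (-log (q i) - 2 * c)) ≤ 0 := by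
    refine sum_nonpos fun i hi => mul_nonpos_of_nonneg_of_nonpos
      (mul_nonneg (hq0 i) (exp_pos _).le) ?_
    have hv : 0 ≤ -log (q i) := neg_nonneg.mpr (log_nonpos (hq0 i) (hq_le i))
    have := (mem_filter.mp hi).2
    nlinarith
  have htail : ∑ i ∈ univ with 2 * c < -log (q i),
      q i * exp (s * -log (q i)) * (-log (q i) * (-log (q i) - 2 * c))
        ≤ ∑ i ∈ univ with 2 * c < -log (q i),
          ((1 : ℕ) : ℝ) * (exp (2 * s * c - 2 * c) * (16 * exp (-2) + 4 * c * exp (-1))) := by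
    refine sum_le_sum fun i hi => ?_
    have hv := (mem_filter.mp hi).2
    -- `log 0 = 0`, so an outcome of weight zero is not in the filter
    have hqi : 0 < q i := (hq0 i).lt_of_ne fun h => by simp [← h] at hv; linarith
    have hq : q i * exp (s * -log (q i)) = exp ((s - 1) * -log (q i)) := by
      nth_rewrite 1 [← exp_log hqi]
      rw [← exp_add]; ring_nf
    rw [Nat.cast_one, one_mul, hq]
    exact exp_sub_one_mul_mul_sub_le hc hs hv.le
  linarith

lemma exp_two_mul_le_four_mul_sum_mul_exp (hq0 : ∀ i, 0 ≤ q i) (hq1 : ∑ i, q i = 1)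
    {c s : ℝ} (hH : ∑ i, negMulLog (q i) ≤ c) (hsc : |s| * c ≤ log 2) :
    exp (2 * s * c) ≤ 4 * ∑ i, q i * exp (s * -log (q i)) := by
  have hH0 : 0 ≤ ∑ i, negMulLog (q i) :=
    sum_nonneg fun i _ => negMulLog_nonneg (hq0 i) (le_one_of_sum_eq_one hq0 hq1 i)
  have hlin : 1 + s * ∑ i, negMulLog (q i) ≤ ∑ i, q i * exp (s * -log (q i)) := by
    calc 1 + s * ∑ i, negMulLog (q i) = ∑ i, q i * (s * -log (q i) + 1) := by
          simp only [mul_add, mul_one, sum_add_distrib, hq1, mul_sum, negMulLog]; ring_nf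
      _ ≤ ∑ i, q i * exp (s * -log (q i)) :=
          sum_le_sum fun i _ => mul_le_mul_of_nonneg_left (add_one_le_exp _) (hq0 i)
  rcases le_or_gt 0 s with hs | hs
  · rw [abs_of_nonneg hs] at hsc
    have : exp (2 * s * c) ≤ 4 := by
      calc exp (2 * s * c) ≤ exp (2 * log 2) := exp_le_exp.mpr (by linarith)
        _ = 4 := by rw [two_mul, exp_add, exp_log two_pos]; norm_num
    nlinarith [mul_nonneg hs hH0]
  · rw [abs_of_neg hs] at hsc
    have : exp (2 * s * c) ≤ 1 := exp_le_one_iff.mpr (by nlinarith)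
    have : s * c ≤ s * ∑ i, negMulLog (q i) := mul_le_mul_of_nonpos_left hH hs.le
    linarith [log_two_lt_d9]

lemma sum_mul_exp_mul_le_mul_sum_mul_exp (hq0 : ∀ i, 0 ≤ q i) (hq1 : ∑ i, q i = 1) {s : ℝ}
    (hs : |s| * log (Fintype.card ι + 3) ≤ log 2) :
    ∑ i, q i * exp (s * -log (q i))
        * (-log (q i) * (-log (q i) - 2 * log (Fintype.card ι + 3)))
      ≤ (Fintype.card ι - 1) / ((Fintype.card ι : ℝ) + 3) ^ 2
          * (64 * exp (-2) + 16 * log (Fintype.card ι + 3) * exp (-1))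
          * ∑ i, q i * exp (s * -log (q i)) := by
  set c := log ((Fintype.card ι : ℝ) + 3)
  have hl2 : 0 < log 2 := log_pos one_lt_two
  have hn : (1 : ℝ) ≤ Fintype.card ι := by exact_mod_cast card_pos_of_sum_eq_one hq1
  have hc : 2 * log 2 ≤ c := by
    rw [← log_rpow two_pos]
    exact log_le_log (by norm_num) (by norm_num; linarith)
  have hlogn : log (Fintype.card ι) ≤ c := log_le_log (by positivity) (by linarith)
  have hs2 : s ≤ 1 / 2 := by nlinarith [le_abs_self s]
  have htail := sum_mul_exp_mul_le_card_filter_mul hq0 (le_one_of_sum_eq_one hq0 hq1)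
    (by linarith : 0 ≤ c) hs2
  have hcard := card_filter_lt_neg_log_le hq1 (b := 2 * c) (by linarith)
  have hmass := exp_two_mul_le_four_mul_sum_mul_exp hq0 hq1
    ((sum_negMulLog_le_log_card hq0 hq1).trans hlogn) hs
  have hexp : exp (2 * s * c - 2 * c) = exp (2 * s * c) / ((Fintype.card ι : ℝ) + 3) ^ 2 := by
    rw [exp_sub, show 2 * c = (2 : ℕ) * c by norm_num, exp_nat_mul, exp_log (by positivity)]
  have hK : 0 ≤ 16 * exp (-2) + 4 * c * exp (-1) := by
    have := exp_pos (-1); have := exp_pos (-2); nlinarith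
  have hn1 : (0 : ℝ) ≤ Fintype.card ι - 1 := by linarith
  calc _ ≤ (Fintype.card ι - 1) * (exp (2 * s * c) / ((Fintype.card ι : ℝ) + 3) ^ 2
          * (16 * exp (-2) + 4 * c * exp (-1))) := by grw [htail, hexp, hcard]
    _ = (Fintype.card ι - 1) / ((Fintype.card ι : ℝ) + 3) ^ 2
          * (16 * exp (-2) + 4 * c * exp (-1)) * exp (2 * s * c) := by ring
    _ ≤ (Fintype.card ι - 1) / ((Fintype.card ι : ℝ) + 3) ^ 2
          * (16 * exp (-2) + 4 * c * exp (-1)) * (4 * ∑ i, q i * exp (s * -log (q i))) := by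
        gcongr
    _ = _ := by ring

theorem sum_mul_exp_mul_sq_le (hq0 : ∀ i, 0 ≤ q i) (hq1 : ∑ i, q i = 1) {s : ℝ}
    (hs : |s| ≤ log 2 / log (Fintype.card ι + 3)) :
    ∑ i, q i * exp (s * -log (q i)) * (-log (q i) - log (Fintype.card ι + 3)) ^ 2
      ≤ log (Fintype.card ι + 3) ^ 2 / log 2 * ∑ i, q i * exp (s * -log (q i)) := by
  set c := log ((Fintype.card ι : ℝ) + 3)
  set D := ∑ i, q i * exp (s * -log (q i))
  have hD0 : 0 ≤ D := sum_nonneg fun i _ => mul_nonneg (hq0 i) (exp_pos _).le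
  have hc : 0 < c := log_pos (by linarith [(Fintype.card ι).cast_nonneg (α := ℝ)])
  calc ∑ i, q i * exp (s * -log (q i)) * (-log (q i) - c) ^ 2
      = c ^ 2 * D + ∑ i, q i * exp (s * -log (q i)) * (-log (q i) * (-log (q i) - 2 * c)) := by
        rw [mul_sum, ← sum_add_distrib]
        exact sum_congr rfl fun i _ => by ring
    _ ≤ c ^ 2 * D + (c ^ 2 / log 2 - c ^ 2) * D := by
        grw [sum_mul_exp_mul_le_mul_sum_mul_exp hq0 hq1 (by rwa [le_div_iff₀ hc] at hs),
          sub_one_div_sq_mul_le (card_pos_of_sum_eq_one hq1)]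
    _ = c ^ 2 / log 2 * D := by ring

end Surprisal

section Conditional

variable {X Y : Type*} [Fintype X] [Fintype Y]

noncomputable def condProb (P : X × Y → ℝ) (z : X × Y) : ℝ := P z / ∑ x, P (x, z.2)

lemma condEntropy'_eq (P : X × Y → ℝ) :
    condEntropy' P = (∑ z, P z * -log (condProb P z)) / log 2 := by
  simp only [condEntropy', logb, condProb, sum_div, ← sum_neg_distrib]
  exact sum_congr rfl fun z _ => by ring

lemma sum_filter_mul_div_rpow_neg {P : X × Y → ℝ} (hP0 : ∀ z, 0 ≤ P z) (t : ℝ) :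
    ∑ z ∈ univ with 0 < P z, P z * (P z / ∑ x, P (x, z.2)) ^ (-t)
      = ∑ z, P z * exp (t * -log (condProb P z)) := by
  refine (sum_filter_of_ne fun z _ hz => (hP0 z).lt_of_ne fun h => hz (by simp [← h])).trans
    (sum_congr rfl fun z _ => ?_)
  rcases (hP0 z).eq_or_lt with h | h
  · simp [← h]
  · have hmarg : P z ≤ ∑ x, P (x, z.2) :=
      single_le_sum (fun x _ => hP0 (x, z.2)) (mem_univ z.1)
    rw [rpow_def_of_pos (div_pos h (h.trans_le hmarg)), condProb]
    ring_nf

theorem sum_mul_exp_mul_condProb_sq_le (P : X × Y → ℝ) (hP0 : ∀ z, 0 ≤ P z) {s : ℝ}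
    (hs : |s| ≤ log 2 / log (Fintype.card X + 3)) :
    ∑ z, P z * exp (s * -log (condProb P z))
        * (-log (condProb P z) - log (Fintype.card X + 3)) ^ 2
      ≤ log (Fintype.card X + 3) ^ 2 / log 2 * ∑ z, P z * exp (s * -log (condProb P z)) := by
  rw [Fintype.sum_prod_type_right, Fintype.sum_prod_type_right, mul_sum]
  refine sum_le_sum fun y _ => ?_
  rcases (sum_nonneg fun x _ => hP0 (x, y) : 0 ≤ ∑ x, P (x, y)).eq_or_lt with hzero | hpos
  · have hPy : ∀ x, P (x, y) = 0 := fun x =>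
      (sum_eq_zero_iff_of_nonneg fun x _ => hP0 (x, y)).mp hzero.symm x (mem_univ x)
    simp [hPy]
  · have hq1 : ∑ x, condProb P (x, y) = 1 := by
      simp only [condProb]; rw [← sum_div, div_self hpos.ne']
    have hpull : ∀ f : X → ℝ,
        ∑ x, P (x, y) * f x = (∑ x, P (x, y)) * ∑ x, condProb P (x, y) * f x := fun f => by
      rw [mul_sum]
      exact sum_congr rfl fun x _ => by rw [condProb, ← mul_assoc, mul_div_cancel₀ _ hpos.ne']
    have key := sum_mul_exp_mul_sq_le (q := fun x => condProb P (x, y))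
      (fun x => div_nonneg (hP0 _) hpos.le) hq1 hs
    simp only [mul_assoc] at key ⊢
    rw [hpull, hpull, mul_left_comm]
    exact mul_le_mul_of_nonneg_left key hpos.le

end Conditional

theorem log_moment_bound_general
    {X Y : Type*} [Fintype X] [Fintype Y]
    (P : X × Y → ℝ) (hP0 : ∀ z, 0 ≤ P z) (hP1 : ∑ z : X × Y, P z = 1)
    (t : ℝ) (ht : |t| ≤ 1 / Real.logb 2 (Fintype.card X + 3)) :
    Real.logb 2
        (∑ z ∈ Finset.univ.filter (fun z : X × Y => 0 < P z),
          P z * (P z / (∑ x : X, P (x, z.2))) ^ (-t))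
      ≤ t * condEntropy' P + (1 / 2) * t ^ 2 * (Real.logb 2 (Fintype.card X + 3)) ^ 2 := by
  have hmgf := log_sum_mul_exp_le hP0 hP1
    (fun u hu => sum_mul_exp_mul_condProb_sq_le P hP0 hu) (t := t)
    (by rwa [logb, one_div_div] at ht)
  rw [sum_filter_mul_div_rpow_neg hP0, condEntropy'_eq, logb, logb]
  calc log (∑ z, P z * exp (t * -log (condProb P z))) / log 2
      ≤ (t * ∑ z, P z * -log (condProb P z)
          + log (Fintype.card X + 3) ^ 2 / log 2 / 2 * t ^ 2) / log 2 := by gcongr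
    _ = _ := by field_simp

theorem log_moment_bound
    {X Y : Type*} [Fintype X] [Fintype Y] [Nonempty X] [Nonempty Y]
    (P : X × Y → ℝ) (hP0 : ∀ z, 0 ≤ P z) (hP1 : ∑ z : X × Y, P z = 1)
    (t : ℝ) (ht : |t| ≤ 1 / Real.logb 2 (Fintype.card X + 3)) :
    Real.logb 2
        (∑ z ∈ Finset.univ.filter (fun z : X × Y => 0 < P z),
          P z * (P z / (∑ x : X, P (x, z.2))) ^ (-t))
      ≤ t * condEntropy' P + (1 / 2) * t ^ 2 * (Real.logb 2 (Fintype.card X + 3)) ^ 2 :=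
  log_moment_bound_general P hP0 hP1 t ht
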